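/- Let 1 ≤ p < ∞, σ ∈ ℝ, let X ⊆ ℓ^{σ,p} be invariant under the flow φ^t(z) = (e^{i ω_n(z) t} z_n)_{n≥1} generated by functions ω_n : X → ℝ (n ≥ 1). Suppose there are real constants (ω_n^∘)_{n≥1} such that for each z ∈ X the sequence ω^⋆(z) = (ω_n(z) − ω_n^∘)_{n≥1} is bounded, and the map z ↦ ω^⋆(z), from X into ℓ^∞ with the supremum norm, is uniformly continuous on bounded subsets of X. Then for every T > 0 the map S : X → C([−T,T], ℓ^{σ,p}), z ↦ (t ↦ φ^t(z)), is uniformly continuous on bounded subsets of X, where C([−T,T], ℓ^{σ,p}) carries the supremum norm. -/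

import Mathlib

/-- The weighted `ℓ^{σ,p}` norm of a complex sequence (indexed by `n ≥ 1`):
`‖z‖_{σ,p} = (∑_{n ≥ 1} n^{σp} |z_n|^p)^{1/p}`. -/
noncomputable def wnorm (σ p : ℝ) (z : ℕ → ℂ) : ℝ :=
  (∑' n : {n : ℕ // 1 ≤ n}, (n.1 : ℝ) ^ (σ * p) * ‖z n.1‖ ^ p) ^ (1 / p)

def MemW (σ p : ℝ) (z : ℕ → ℂ) : Prop :=
  Summable fun n : {n : ℕ // 1 ≤ n} => (n.1 : ℝ) ^ (σ * p) * ‖z n.1‖ ^ p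

/-!
Each coordinate of the flow is a rotation, so `φ^t z - φ^t w` splits coordinatewise as
`e^{iω_n(z)t}(z_n - w_n) + (e^{iω_n(z)t} - e^{iω_n(w)t}) w_n`. The first term has the size of
`z - w`; the second is at most `|t| ‖ω^⋆(z) - ω^⋆(w)‖_∞ |w_n|`, since `x ↦ e^{ix}` is
1-Lipschitz and the constants `ω_n^∘` cancel. Minkowski's inequality in `ℓ^{σ,p}` then gives
`‖φ^t z - φ^t w‖ ≤ ‖z - w‖ + |t| ‖ω^⋆(z) - ω^⋆(w)‖_∞ ‖w‖`.
-/

open Complex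

lemma natCast_rpow_mul_rpow (σ p : ℝ) (n : ℕ) {a : ℝ} (ha : 0 ≤ a) :
    ((n : ℝ) ^ σ * a) ^ p = (n : ℝ) ^ (σ * p) * a ^ p := by
  rw [Real.mul_rpow (by positivity) ha, ← Real.rpow_mul (Nat.cast_nonneg _)]

section WeightedNorm

variable {σ p : ℝ}

theorem MemW.of_norm_le_add (hp : 1 ≤ p) {u v d : ℕ → ℂ} (hu : MemW σ p u)
    (hv : MemW σ p v) (h : ∀ n, ‖d n‖ ≤ ‖u n‖ + ‖v n‖) :
    MemW σ p d ∧ wnorm σ p d ≤ wnorm σ p u + wnorm σ p v := by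
  set f : {n : ℕ // 1 ≤ n} → ℝ := fun n => (n.1 : ℝ) ^ σ * ‖u n.1‖
  set g : {n : ℕ // 1 ≤ n} → ℝ := fun n => (n.1 : ℝ) ^ σ * ‖v n.1‖
  have hf : (fun n => f n ^ p) = fun n => (n.1 : ℝ) ^ (σ * p) * ‖u n.1‖ ^ p :=
    funext fun n => natCast_rpow_mul_rpow σ p n.1 (norm_nonneg _)
  have hg : (fun n => g n ^ p) = fun n => (n.1 : ℝ) ^ (σ * p) * ‖v n.1‖ ^ p :=
    funext fun n => natCast_rpow_mul_rpow σ p n.1 (norm_nonneg _)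
  obtain ⟨hsum, hmink⟩ := Real.Lp_add_le_tsum_of_nonneg (f := f) (g := g) hp
    (fun _ => by positivity) (fun _ => by positivity) (by rw [hf]; exact hu) (by rw [hg]; exact hv)
  have hd : ∀ n : {n : ℕ // 1 ≤ n}, (n.1 : ℝ) ^ (σ * p) * ‖d n.1‖ ^ p ≤ (f n + g n) ^ p := by
    intro n
    rw [← natCast_rpow_mul_rpow σ p n.1 (norm_nonneg _), ← mul_add]
    gcongr
    exact h n.1
  have hmd : MemW σ p d := hsum.of_nonneg_of_le (fun _ => by positivity) hd
  refine ⟨hmd, ?_⟩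
  calc wnorm σ p d ≤ (∑' n, (f n + g n) ^ p) ^ (1 / p) := by
        unfold wnorm
        gcongr
        exact hd _
    _ ≤ (∑' n, f n ^ p) ^ (1 / p) + (∑' n, g n ^ p) ^ (1 / p) := hmink
    _ = wnorm σ p u + wnorm σ p v := by rw [hf, hg]; rfl

theorem MemW.sub (hp : 1 ≤ p) {u v : ℕ → ℂ} (hu : MemW σ p u) (hv : MemW σ p v) :
    MemW σ p (fun n => u n - v n) :=
  (hu.of_norm_le_add hp hv fun n => norm_sub_le (u n) (v n)).1

theorem MemW.const_smul (hp : 0 < p) (c : ℂ) {z : ℕ → ℂ} (hz : MemW σ p z) :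
    MemW σ p (c • z) ∧ wnorm σ p (c • z) = ‖c‖ * wnorm σ p z := by
  have hterm : ∀ n : {n : ℕ // 1 ≤ n}, (n.1 : ℝ) ^ (σ * p) * ‖(c • z) n.1‖ ^ p
      = ‖c‖ ^ p * ((n.1 : ℝ) ^ (σ * p) * ‖z n.1‖ ^ p) := fun n => by
    rw [Pi.smul_apply, smul_eq_mul, norm_mul, Real.mul_rpow (norm_nonneg _) (norm_nonneg _)]
    ring
  refine ⟨?_, ?_⟩
  · unfold MemW
    simp only [hterm]
    exact hz.mul_left _
  · unfold wnorm
    simp only [hterm]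
    rw [tsum_mul_left, Real.mul_rpow (by positivity) (tsum_nonneg fun _ => by positivity),
      one_div, Real.rpow_rpow_inv (norm_nonneg _) hp.ne']

end WeightedNorm

lemma norm_exp_I_mul_sub_exp_I_mul_le (a b : ℝ) :
    ‖exp (I * a) - exp (I * b)‖ ≤ |a - b| := by
  have hfactor : exp (I * a) - exp (I * b) = exp (I * b) * (exp (I * ↑(a - b)) - 1) := by
    rw [mul_sub, mul_one, ← exp_add]
    congr 2
    push_cast
    ring
  rw [hfactor, norm_mul, norm_exp_I_mul_ofReal, one_mul]
  exact Real.norm_exp_I_mul_ofReal_sub_one_le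

lemma norm_exp_I_mul_smul_sub_le (a b : ℝ) (z w : ℂ) :
    ‖exp (I * a) * z - exp (I * b) * w‖ ≤ ‖z - w‖ + |a - b| * ‖w‖ :=
  calc ‖exp (I * a) * z - exp (I * b) * w‖
      = ‖exp (I * a) * (z - w) + (exp (I * a) - exp (I * b)) * w‖ := by ring_nf
    _ ≤ ‖exp (I * a) * (z - w)‖ + ‖(exp (I * a) - exp (I * b)) * w‖ := norm_add_le _ _
    _ ≤ ‖z - w‖ + |a - b| * ‖w‖ := by
        rw [norm_mul, norm_mul, norm_exp_I_mul_ofReal, one_mul]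
        gcongr
        exact norm_exp_I_mul_sub_exp_I_mul_le a b

theorem wnorm_exp_I_mul_sub_le {σ p : ℝ} (hp : 1 ≤ p) {z w : ℕ → ℂ} (hz : MemW σ p z)
    (hw : MemW σ p w) {θ ψ : ℕ → ℝ} {η : ℝ} (hθψ : ∀ n, |θ n - ψ n| ≤ η) :
    wnorm σ p (fun n => exp (I * θ n) * z n - exp (I * ψ n) * w n)
      ≤ wnorm σ p (fun n => z n - w n) + η * wnorm σ p w := by
  have hη : 0 ≤ η := (abs_nonneg _).trans (hθψ 0)
  have hnorm : ‖(η : ℂ)‖ = η := by rw [norm_real, Real.norm_of_nonneg hη]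
  obtain ⟨hηw, hηw_norm⟩ := hw.const_smul (by linarith) (η : ℂ)
  rw [hnorm] at hηw_norm
  refine ((hz.sub hp hw).of_norm_le_add hp hηw fun n => ?_).2.trans_eq (by rw [hηw_norm])
  rw [Pi.smul_apply, smul_eq_mul, norm_mul, hnorm]
  exact (norm_exp_I_mul_smul_sub_le _ _ _ _).trans (by gcongr; exact hθψ n)

theorem stmt13_general (p σ : ℝ) (hp : 1 ≤ p)
    (X : Set (ℕ → ℂ)) (hX : ∀ x ∈ X, MemW σ p x)
    (ω : ℕ → (ℕ → ℂ) → ℝ)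
    (flow : ℝ → (ℕ → ℂ) → ℕ → ℂ)
    (hflow : ∀ (t : ℝ) (z : ℕ → ℂ) (n : ℕ),
      flow t z n = Complex.exp (Complex.I * (ω n z : ℂ) * (t : ℂ)) * z n)
    (ω₀ : ℕ → ℝ)
    (hUC : ∀ R > 0, ∀ ε > 0, ∃ δ > 0, ∀ z ∈ X, ∀ w ∈ X,
      wnorm σ p z ≤ R → wnorm σ p w ≤ R →
      wnorm σ p (fun m => z m - w m) < δ →
      ∀ n : ℕ, |(ω n z - ω₀ n) - (ω n w - ω₀ n)| ≤ ε) :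
    ∀ T > 0, ∀ R > 0, ∀ ε > 0, ∃ δ > 0, ∀ z ∈ X, ∀ w ∈ X,
      wnorm σ p z ≤ R → wnorm σ p w ≤ R →
      wnorm σ p (fun m => z m - w m) < δ →
      ∀ t : ℝ, |t| ≤ T → wnorm σ p (fun m => flow t z m - flow t w m) ≤ ε := by
  intro T hT R hR ε hε
  obtain ⟨δ, hδ, hω⟩ := hUC R hR (ε / (2 * T * R)) (by positivity)
  refine ⟨min δ (ε / 2), by positivity, fun z hz w hw hzR hwR hzw t ht => ?_⟩
  have hphase : ∀ n, |ω n z * t - ω n w * t| ≤ ε / (2 * T * R) * T := fun n => by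
    have hωn := hω z hz w hw hzR hwR (hzw.trans_le (min_le_left _ _)) n
    rw [sub_sub_sub_cancel_right] at hωn
    rw [← sub_mul, abs_mul]
    gcongr
  have hrot : ∀ v n, flow t v n = exp (I * ↑(ω n v * t)) * v n := fun v n => by
    rw [hflow]
    push_cast
    ring_nf
  simp only [hrot]
  calc _ ≤ wnorm σ p (fun m => z m - w m) + ε / (2 * T * R) * T * wnorm σ p w :=
        wnorm_exp_I_mul_sub_le hp (hX z hz) (hX w hw) hphase
    _ ≤ ε / 2 + ε / (2 * T * R) * T * R := by
        gcongr
        exact (hzw.trans_le (min_le_right _ _)).le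
    _ = ε := by field_simp; ring

/-- Let `X ⊆ ℓ^{σ,p}` be invariant under the flow `φ^t(z) = (e^{i ω_n(z) t} z_n)_{n≥1}`.
Suppose there are real constants `(ω_n^∘)` such that `ω^⋆(z) = (ω_n(z) − ω_n^∘)_n` is
bounded for each `z ∈ X` and `z ↦ ω^⋆(z) ∈ ℓ^∞` is uniformly continuous on bounded
subsets of `X`.  Then for every `T > 0` the solution map `S : X → C([−T,T], ℓ^{σ,p})`
(supremum norm) is uniformly continuous on bounded subsets of `X` (ε-δ form). -/
theorem stmt13 (p σ : ℝ) (hp : 1 ≤ p)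
    (X : Set (ℕ → ℂ)) (hX : ∀ x ∈ X, MemW σ p x)
    (ω : ℕ → (ℕ → ℂ) → ℝ)
    (flow : ℝ → (ℕ → ℂ) → ℕ → ℂ)
    (hflow : ∀ (t : ℝ) (z : ℕ → ℂ) (n : ℕ),
      flow t z n = Complex.exp (Complex.I * (ω n z : ℂ) * (t : ℂ)) * z n)
    (hinv : ∀ t : ℝ, ∀ z ∈ X, flow t z ∈ X)
    (ω₀ : ℕ → ℝ)
    (hbdd : ∀ z ∈ X, ∃ M : ℝ, ∀ n : ℕ, |ω n z - ω₀ n| ≤ M)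
    (hUC : ∀ R > 0, ∀ ε > 0, ∃ δ > 0, ∀ z ∈ X, ∀ w ∈ X,
      wnorm σ p z ≤ R → wnorm σ p w ≤ R →
      wnorm σ p (fun m => z m - w m) < δ →
      ∀ n : ℕ, |(ω n z - ω₀ n) - (ω n w - ω₀ n)| ≤ ε) :
    ∀ T > 0, ∀ R > 0, ∀ ε > 0, ∃ δ > 0, ∀ z ∈ X, ∀ w ∈ X,
      wnorm σ p z ≤ R → wnorm σ p w ≤ R →
      wnorm σ p (fun m => z m - w m) < δ →
      ∀ t : ℝ, |t| ≤ T → wnorm σ p (fun m => flow t z m - flow t w m) ≤ ε :=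
  stmt13_general p σ hp X hX ω flow hflow ω₀ hUC
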